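/- Let M ≥ 1, h > 0, δ ≥ 0, and let H̄_1, …, H̄_M be real numbers with H̄_j ≥ h for all j and |H̄_i − H̄_j| ≤ δ for all pairs i, j. Define the normalized weights w_i = (1/H̄_i) / Σ_{j=1}^M (1/H̄_j). Then for every i, |w_i − 1/M| ≤ δ / (M · H̄_i) ≤ δ / (M · h). -/

import Mathlib

/-!
Write `S = ∑ⱼ 1/H̄ⱼ`. Then `wᵢ - 1/M = ∑ⱼ (1/H̄ᵢ - 1/H̄ⱼ) / (M S)`, and
`|1/H̄ᵢ - 1/H̄ⱼ| = |H̄ⱼ - H̄ᵢ| / (H̄ᵢ H̄ⱼ) ≤ (δ/H̄ᵢ) · (1/H̄ⱼ)`, so the numerator is at most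
`(δ/H̄ᵢ) S` in absolute value and the `S` cancels.
-/

open Finset

theorem abs_inv_sub_inv_le_of_abs_sub_le {a b δ : ℝ} (ha : 0 < a) (hb : 0 < b)
    (hab : |b - a| ≤ δ) : |a⁻¹ - b⁻¹| ≤ δ / a * b⁻¹ := by
  rw [inv_sub_inv ha.ne' hb.ne', abs_div, abs_of_pos (mul_pos ha hb), ← div_div, div_eq_mul_inv]
  gcongr

theorem abs_div_sum_sub_inv_card_le {ι : Type*} [Fintype ι] [Nonempty ι] {f : ι → ℝ}
    (hf : ∀ j, 0 < f j) {a ε : ℝ} (hfa : ∀ j, |a - f j| ≤ ε * f j) :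
    |a / ∑ j, f j - 1 / Fintype.card ι| ≤ ε / Fintype.card ι := by
  have hS : 0 < ∑ j, f j := sum_pos (fun j _ => hf j) univ_nonempty
  have hn : (0 : ℝ) < Fintype.card ι := by exact_mod_cast Fintype.card_pos
  have hsplit : a / ∑ j, f j - 1 / Fintype.card ι
      = (∑ j, (a - f j)) / (Fintype.card ι * ∑ j, f j) := by
    rw [sum_sub_distrib, sum_const, card_univ, nsmul_eq_mul]
    field_simp
  have hbound : |∑ j, (a - f j)| ≤ ε * ∑ j, f j :=
    calc |∑ j, (a - f j)| ≤ ∑ j, |a - f j| := abs_sum_le_sum_abs _ _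
      _ ≤ ∑ j, ε * f j := sum_le_sum fun j _ => hfa j
      _ = ε * ∑ j, f j := (mul_sum _ _ _).symm
  rw [hsplit, abs_div, abs_of_pos (mul_pos hn hS), div_le_div_iff₀ (mul_pos hn hS) hn]
  calc |∑ j, (a - f j)| * Fintype.card ι ≤ (ε * ∑ j, f j) * Fintype.card ι := by gcongr
    _ = ε * (Fintype.card ι * ∑ j, f j) := by ring

open Finset in
theorem clustered_entropies_near_uniform_weights_general (M : ℕ)
    (h δ : ℝ) (hh : 0 < h)
    (H : Fin M → ℝ) (hH : ∀ j, h ≤ H j) (hdiff : ∀ i j, |H i - H j| ≤ δ)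
    (i : Fin M) :
    |(1 / H i) / (∑ j, 1 / H j) - 1 / (M : ℝ)| ≤ δ / ((M : ℝ) * H i) ∧
    δ / ((M : ℝ) * H i) ≤ δ / ((M : ℝ) * h) := by
  have hHpos : ∀ j, 0 < H j := fun j => hh.trans_le (hH j)
  have hδ : 0 ≤ δ := (abs_nonneg _).trans ((sub_self (H i)).symm ▸ hdiff i i)
  have hM : (0 : ℝ) < M := by exact_mod_cast i.pos
  have : Nonempty (Fin M) := ⟨i⟩
  refine ⟨?_, by gcongr; exact hH i⟩
  have hclose : ∀ j, |1 / H i - 1 / H j| ≤ δ / H i * (1 / H j) := fun j => by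
    simpa only [one_div] using
      abs_inv_sub_inv_le_of_abs_sub_le (hHpos i) (hHpos j) (hdiff j i)
  have hweight := abs_div_sum_sub_inv_card_le (fun j => one_div_pos.2 (hHpos j)) hclose
  rwa [Fintype.card_fin, div_div δ, mul_comm (H i)] at hweight

open Finset in
/-- Quantitative Lemma 2: when entropies are closely clustered (pairwise within δ, all at
least h), the normalized inverse-entropy weights are nearly uniform:
|w_i − 1/M| ≤ δ/(M H̄_i) ≤ δ/(M h). -/
theorem clustered_entropies_near_uniform_weights (M : ℕ) (hM : 1 ≤ M)
    (h δ : ℝ) (hh : 0 < h) (hδ : 0 ≤ δ)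
    (H : Fin M → ℝ) (hH : ∀ j, h ≤ H j) (hdiff : ∀ i j, |H i - H j| ≤ δ)
    (i : Fin M) :
    |(1 / H i) / (∑ j, 1 / H j) - 1 / (M : ℝ)| ≤ δ / ((M : ℝ) * H i) ∧
    δ / ((M : ℝ) * H i) ≤ δ / ((M : ℝ) * h) :=
  clustered_entropies_near_uniform_weights_general M h δ hh H hH hdiff i
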